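/- Let σ > 0, let x, δ ∈ ℝ^d with δ ≠ 0, and let β ∈ ℝ. Let S = {z ∈ ℝ^d : ⟨δ, z⟩ ≥ β}, and let h : ℝ^d → [0,1] be any measurable function (representing the acceptance probability of a possibly randomized binary decision rule). If ∫ h dν_{x,σ} ≤ ν_{x,σ}(S), then ∫ h dν_{x+δ,σ} ≤ ν_{x+δ,σ}(S). -/

import Mathlib

open MeasureTheory ProbabilityTheory

/-- Standard normal CDF. -/
noncomputable def Phi (t : ℝ) : ℝ := ((gaussianReal 0 1) (Set.Iic t)).toReal

/-- Inverse of the standard normal CDF on `(0,1)`. -/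
noncomputable def PhiInv : ℝ → ℝ := Function.invFun Phi

/-- Gaussian measure on `ℝ^d` with mean `m` and covariance `σ² I`
(product of `d` one-dimensional Gaussians). -/
noncomputable def gaussianVec {d : ℕ} (m : EuclideanSpace ℝ (Fin d)) (σ : ℝ) :
    Measure (EuclideanSpace ℝ (Fin d)) :=
  (Measure.pi fun i => gaussianReal (m i) ((σ ^ 2).toNNReal)).map
    (MeasurableEquiv.toLp 2 (Fin d → ℝ))

/-! The law `ν_{x+δ,σ}` has density `L z = exp ((⟪δ, z - x⟫ - ‖δ‖² / 2) / σ²)` with respect to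
`ν_{x,σ}`, an increasing function of `⟪δ, z⟫`; so `S = {L ≥ t}` with `t` the value of `L` on the
hyperplane `⟪δ, z⟫ = β`. Pointwise `(L - t) (1_S - h) ≥ 0`, and integrating against `ν_{x,σ}` gives
`ν_{x+δ,σ}(S) - ∫ h dν_{x+δ,σ} ≥ t (ν_{x,σ}(S) - ∫ h dν_{x,σ}) ≥ 0`. -/

open scoped NNReal ENNReal
open Set Real

theorem lintegral_fin_nat_prod_eq_prod {n : ℕ} {E : Type*} [MeasurableSpace E]
    {μ : Fin n → Measure E} [∀ i, SigmaFinite (μ i)] {f : Fin n → E → ℝ≥0∞}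
    (hf : ∀ i, Measurable (f i)) :
    ∫⁻ x, ∏ i, f i (x i) ∂Measure.pi μ = ∏ i, ∫⁻ x, f i x ∂μ i := by
  induction n with
  | zero => simp
  | succ n ih =>
    calc
      _ = ∫⁻ x : E × (Fin n → E), f 0 x.1 * ∏ i : Fin n, f i.succ (x.2 i)
          ∂(μ 0).prod (Measure.pi fun i => μ i.succ) := by
        rw [← ((measurePreserving_piFinSuccAbove μ 0).symm).lintegral_comp (by fun_prop)]
        simp [MeasurableEquiv.piFinSuccAbove_symm_apply, Fin.prod_univ_succ, Fin.zero_succAbove]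
      _ = ∏ i, ∫⁻ x, f i x ∂μ i := by
        rw [lintegral_prod_mul (g := fun y : Fin n → E => ∏ i, f i.succ (y i))
          (hf 0).aemeasurable
          (Finset.measurable_prod _ fun i _ => (hf _).comp (measurable_pi_apply i)).aemeasurable,
          ih fun i => hf i.succ,
          Fin.prod_univ_succ]

theorem lintegral_fintype_prod_eq_prod {ι : Type*} [Fintype ι] {E : Type*} [MeasurableSpace E]
    {μ : ι → Measure E} [∀ i, SigmaFinite (μ i)] {f : ι → E → ℝ≥0∞}
    (hf : ∀ i, Measurable (f i)) :
    ∫⁻ x, ∏ i, f i (x i) ∂Measure.pi μ = ∏ i, ∫⁻ x, f i x ∂μ i := by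
  let e := (Fintype.equivFin ι).symm
  rw [← (measurePreserving_piCongrLeft _ e).lintegral_comp (by fun_prop)]
  simp_rw [← e.prod_comp, MeasurableEquiv.coe_piCongrLeft, Equiv.piCongrLeft_apply_apply]
  exact lintegral_fin_nat_prod_eq_prod fun i => hf (e i)

theorem MeasureTheory.Measure.pi_withDensity {ι : Type*} [Fintype ι] {E : Type*} [MeasurableSpace E]
    (μ : ι → Measure E) [∀ i, SigmaFinite (μ i)] {f : ι → E → ℝ≥0∞}
    (hf : ∀ i, Measurable (f i)) [∀ i, SigmaFinite ((μ i).withDensity (f i))] :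
    Measure.pi (fun i => (μ i).withDensity (f i)) =
      (Measure.pi μ).withDensity fun x => ∏ i, f i (x i) := by
  refine Measure.pi_eq fun s hs => ?_
  have hind : ∀ x, (univ.pi s).indicator (fun x => ∏ i, f i (x i)) x =
      ∏ i, (s i).indicator (f i) (x i) := by
    intro x
    by_cases hx : x ∈ univ.pi s
    · simp_all [indicator_of_mem]
    · obtain ⟨i, hi⟩ : ∃ i, x i ∉ s i := by simpa using hx
      rw [indicator_of_notMem hx,
        Finset.prod_eq_zero (Finset.mem_univ i) (indicator_of_notMem hi _)]
  rw [withDensity_apply _ (.univ_pi hs), ← lintegral_indicator (.univ_pi hs),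
    lintegral_congr hind, lintegral_fintype_prod_eq_prod fun i => (hf i).indicator (hs i)]
  simp_rw [lintegral_indicator (hs _), withDensity_apply _ (hs _)]

theorem gaussianReal_add_eq_withDensity (m c : ℝ) {v : ℝ≥0} (hv : v ≠ 0) :
    gaussianReal (m + c) v =
      (gaussianReal m v).withDensity
        fun t => ENNReal.ofReal (exp ((c * (t - m) - c ^ 2 / 2) / v)) := by
  rw [gaussianReal_of_var_ne_zero _ hv, gaussianReal_of_var_ne_zero _ hv,
    ← withDensity_mul _ (measurable_gaussianPDF _ _) (by fun_prop)]
  congr 1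
  ext t
  simp only [Pi.mul_apply, gaussianPDF, gaussianPDFReal]
  rw [← ENNReal.ofReal_mul (by positivity), mul_assoc _ (rexp _), ← exp_add]
  congr 3
  field_simp
  ring

theorem MeasurableEquiv.map_withDensity {α β : Type*} [MeasurableSpace α] [MeasurableSpace β]
    (e : α ≃ᵐ β) (μ : Measure α) {f : α → ℝ≥0∞} (hf : Measurable f) :
    (μ.withDensity f).map e = (μ.map e).withDensity (f ∘ e.symm) := by
  ext s hs
  rw [Measure.map_apply e.measurable hs, withDensity_apply _ hs,
    withDensity_apply _ (e.measurable hs),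
    setLIntegral_map hs (hf.comp e.symm.measurable) e.measurable]
  simp

instance isProbabilityMeasure_gaussianVec {d : ℕ} (m : EuclideanSpace ℝ (Fin d)) (σ : ℝ) :
    IsProbabilityMeasure (gaussianVec m σ) :=
  Measure.isProbabilityMeasure_map (by fun_prop)

theorem gaussianVec_add_eq_withDensity {d : ℕ} (x δ : EuclideanSpace ℝ (Fin d)) {σ : ℝ}
    (hσ : σ ≠ 0) :
    gaussianVec (x + δ) σ = (gaussianVec x σ).withDensity
      fun z => ENNReal.ofReal (exp ((inner ℝ δ (z - x) - ‖δ‖ ^ 2 / 2) / σ ^ 2)) := by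
  have hv : (σ ^ 2).toNNReal ≠ 0 := by simpa using hσ
  have hdens : ∀ i, Measurable fun t : ℝ =>
      ENNReal.ofReal (exp ((δ i * (t - x i) - δ i ^ 2 / 2) / (σ ^ 2).toNNReal)) :=
    fun i => by fun_prop
  unfold gaussianVec
  simp_rw [PiLp.add_apply, gaussianReal_add_eq_withDensity _ _ hv]
  rw [Measure.pi_withDensity _ hdens, MeasurableEquiv.map_withDensity _ _ ?_]
  · congr 1
    funext z
    rw [Function.comp_apply, ← ENNReal.ofReal_prod_of_nonneg fun i _ => (exp_pos _).le,
      ← exp_sum, ← Finset.sum_div, Real.coe_toNNReal _ (sq_nonneg σ), PiLp.inner_apply,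
      EuclideanSpace.norm_sq_eq, Finset.sum_div _ _ (2 : ℝ), ← Finset.sum_sub_distrib]
    simp [mul_comm]
  · exact Finset.measurable_prod _ fun i _ => (hdens i).comp (measurable_pi_apply i)

theorem integral_le_measureReal_of_withDensity_threshold {α : Type*} [MeasurableSpace α]
    {μ ν : Measure α} [IsFiniteMeasure μ] [IsFiniteMeasure ν] {ρ : α → ℝ≥0} (hρ : Measurable ρ)
    (hν : ν = μ.withDensity fun z => ρ z) {S : Set α} (hS : MeasurableSet S) {t : ℝ≥0}
    (hρS : ∀ z ∈ S, t ≤ ρ z) (hρSc : ∀ z ∉ S, ρ z ≤ t)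
    {h : α → ℝ} (hh : Measurable h) (h01 : ∀ z, h z ∈ Icc (0 : ℝ) 1)
    (hμ : ∫ z, h z ∂μ ≤ μ.real S) :
    ∫ z, h z ∂ν ≤ ν.real S := by
  set g : α → ℝ := S.indicator 1 - h
  have hh_int : ∀ (m : Measure α) [IsFiniteMeasure m], Integrable h m := fun m _ =>
    .of_bound hh.aestronglyMeasurable 1 (.of_forall fun z => by
      rw [Real.norm_eq_abs, abs_le]; constructor <;> linarith [(h01 z).1, (h01 z).2])
  have hg_int : ∀ (m : Measure α) [IsFiniteMeasure m], Integrable g m := fun m _ =>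
    ((integrable_const 1).indicator hS).sub (hh_int m)
  have hg_eq : ∀ (m : Measure α) [IsFiniteMeasure m], ∫ z, g z ∂m = m.real S - ∫ z, h z ∂m :=
    fun m _ => by
      rw [← integral_indicator_one hS]
      exact integral_sub ((integrable_const 1).indicator hS) (hh_int m)
  have hpt : ∀ z, (t : ℝ) * g z ≤ ρ z • g z := by
    intro z
    by_cases hz : z ∈ S
    · have : 0 ≤ g z := by simp [g, hz, (h01 z).2]
      exact mul_le_mul_of_nonneg_right (by exact_mod_cast hρS z hz) this
    · have : g z ≤ 0 := by simp [g, hz, (h01 z).1]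
      exact mul_le_mul_of_nonpos_right (by exact_mod_cast hρSc z hz) this
  have hg_ρ : Integrable (fun z => ρ z • g z) μ :=
    (integrable_withDensity_iff_integrable_smul hρ).1 (hν ▸ hg_int ν)
  have : 0 ≤ ∫ z, g z ∂ν :=
    calc 0 ≤ (t : ℝ) * ∫ z, g z ∂μ := by
          rw [hg_eq μ]; exact mul_nonneg t.2 (sub_nonneg.2 hμ)
      _ = ∫ z, (t : ℝ) * g z ∂μ := (integral_const_mul _ _).symm
      _ ≤ ∫ z, ρ z • g z ∂μ := integral_mono ((hg_int μ).const_mul _) hg_ρ hpt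
      _ = ∫ z, g z ∂ν := by rw [hν, integral_withDensity_eq_integral_smul hρ]
  rw [hg_eq ν] at this
  linarith

theorem neyman_pearson_ge_general {d : ℕ} (σ : ℝ) (hσ : 0 < σ)
    (x δ : EuclideanSpace ℝ (Fin d)) (β : ℝ)
    (S : Set (EuclideanSpace ℝ (Fin d)))
    (hS : S = {z | β ≤ (inner ℝ δ z : ℝ)})
    (h : EuclideanSpace ℝ (Fin d) → ℝ) (hmeas : Measurable h)
    (h01 : ∀ z, h z ∈ Set.Icc (0 : ℝ) 1)
    (hX : ∫ z, h z ∂(gaussianVec x σ) ≤ ((gaussianVec x σ) S).toReal) :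
    ∫ z, h z ∂(gaussianVec (x + δ) σ) ≤ ((gaussianVec (x + δ) σ) S).toReal := by
  subst hS
  set L : ℝ → ℝ := fun s => exp ((s - inner ℝ δ x - ‖δ‖ ^ 2 / 2) / σ ^ 2)
  have hL : Monotone L := fun a b hab => exp_le_exp.2 (by gcongr)
  have hS_meas : MeasurableSet {z | β ≤ inner ℝ δ z} :=
    measurableSet_le measurable_const (by fun_prop)
  refine integral_le_measureReal_of_withDensity_threshold
    (ρ := fun z => (L (inner ℝ δ z)).toNNReal) (t := (L β).toNNReal) (by fun_prop) ?_ hS_meas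
    (fun z (hz : β ≤ _) => Real.toNNReal_le_toNNReal (hL hz))
    (fun z (hz : ¬β ≤ _) => Real.toNNReal_le_toNNReal (hL (not_le.1 hz).le)) hmeas h01 hX
  rw [gaussianVec_add_eq_withDensity x δ hσ.ne']
  simp only [inner_sub_right, L, sub_sub]
  rfl

/-- **Neyman–Pearson lemma, part (2) (Lemma 4(2) of Cohen et al.).**
If a randomized rule `h` accepts under `ν_{x,σ}` at most as often as the half-space
`S = {z : ⟨δ, z⟩ ≥ β}`, then it also does so under `ν_{x+δ,σ}`. -/
theorem neyman_pearson_ge {d : ℕ} (σ : ℝ) (hσ : 0 < σ)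
    (x δ : EuclideanSpace ℝ (Fin d)) (hδ : δ ≠ 0) (β : ℝ)
    (S : Set (EuclideanSpace ℝ (Fin d)))
    (hS : S = {z | β ≤ (inner ℝ δ z : ℝ)})
    (h : EuclideanSpace ℝ (Fin d) → ℝ) (hmeas : Measurable h)
    (h01 : ∀ z, h z ∈ Set.Icc (0 : ℝ) 1)
    (hX : ∫ z, h z ∂(gaussianVec x σ) ≤ ((gaussianVec x σ) S).toReal) :
    ∫ z, h z ∂(gaussianVec (x + δ) σ) ≤ ((gaussianVec (x + δ) σ) S).toReal :=
  neyman_pearson_ge_general σ hσ x δ β S hS h hmeas h01 hX
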